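/- Let z : ℤ with 6 ≤ |z| and let R_z := AdjoinRoot (X^2 - C z * X + 1 : ℤ[X]) with ω := AdjoinRoot.root. Then for all e₁ e₂ : ℤ with (e₁ = 1 ∨ e₁ = -1) and (e₂ = 1 ∨ e₂ = -1), the element e₁ + e₂•ω is irreducible in R_z. -/

import Mathlib

open Polynomial

noncomputable abbrev Rz (z : ℤ) : Type :=
  AdjoinRoot (X ^ 2 - C z * X + 1 : ℤ[X])

noncomputable abbrev omegaZ (z : ℤ) : Rz z :=
  AdjoinRoot.root (X ^ 2 - C z * X + 1 : ℤ[X])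

private lemma f_monic (z : ℤ) : (X ^ 2 - C z * X + 1 : ℤ[X]).Monic := by
  monicity!

private lemma f_degree (z : ℤ) : (X ^ 2 - C z * X + 1 : ℤ[X]).degree = 2 := by
  compute_degree!

private lemma omega_rel (z : ℤ) :
    (omegaZ z) ^ 2 = (z : Rz z) * omegaZ z - 1 := by
  have h := AdjoinRoot.mk_self (f := (X ^ 2 - C z * X + 1 : ℤ[X]))
  simp only [map_add, map_sub, map_mul, map_pow, map_one, AdjoinRoot.mk_X,
    AdjoinRoot.mk_C, eq_intCast, map_intCast] at h
  linear_combination h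

private lemma repr_exists (z : ℤ) (x : Rz z) :
    ∃ a b : ℤ, x = (a : Rz z) + (b : Rz z) * omegaZ z := by
  obtain ⟨p, rfl⟩ := AdjoinRoot.mk_surjective x
  refine ⟨(p %ₘ (X ^ 2 - C z * X + 1)).coeff 0, (p %ₘ (X ^ 2 - C z * X + 1)).coeff 1, ?_⟩
  conv_lhs => rw [← modByMonic_add_div p (X ^ 2 - C z * X + 1)]
  rw [map_add, map_mul, AdjoinRoot.mk_self, zero_mul, add_zero]
  have hdeg : (p %ₘ (X ^ 2 - C z * X + 1)).degree < 2 := by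
    rw [← f_degree z]; exact degree_modByMonic_lt p (f_monic z)
  have hle : (p %ₘ (X ^ 2 - C z * X + 1)).degree ≤ 1 := by
    refine (Polynomial.degree_le_iff_coeff_zero _ _).mpr ?_
    intro k hk
    apply Polynomial.coeff_eq_zero_of_degree_lt
    refine lt_of_lt_of_le hdeg ?_
    have hk2 : 2 ≤ k := by
      have : 1 < k := by exact_mod_cast hk
      omega
    exact_mod_cast hk2
  conv_lhs => rw [eq_X_add_C_of_degree_le_one hle]
  simp only [map_add, map_mul, AdjoinRoot.mk_X, AdjoinRoot.mk_C, eq_intCast, map_intCast]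
  ring

private lemma repr_unique (z : ℤ) (a b : ℤ)
    (h : (a : Rz z) + (b : Rz z) * omegaZ z = 0) : a = 0 ∧ b = 0 := by
  have hmk : AdjoinRoot.mk (X ^ 2 - C z * X + 1 : ℤ[X]) (C a + C b * X) = 0 := by
    rw [map_add, map_mul, AdjoinRoot.mk_X, AdjoinRoot.mk_C, AdjoinRoot.mk_C,
      eq_intCast, eq_intCast]
    exact h
  rw [AdjoinRoot.mk_eq_zero] at hmk
  have hg : (C a + C b * X : ℤ[X]) = 0 := by
    by_contra hne
    have := Polynomial.degree_le_of_dvd hmk hne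
    rw [f_degree z] at this
    have hd : (C a + C b * X : ℤ[X]).degree ≤ 1 := by
      calc (C a + C b * X : ℤ[X]).degree ≤ max (C a).degree (C b * X).degree :=
            degree_add_le _ _
        _ ≤ 1 := by
            apply max_le (le_trans (degree_C_le) (by norm_num))
            calc (C b * X : ℤ[X]).degree ≤ (C b).degree + X.degree := degree_mul_le _ _
              _ ≤ 0 + 1 := add_le_add degree_C_le degree_X_le
              _ = 1 := by norm_num
    have : (2 : WithBot ℕ) ≤ 1 := le_trans this hd
    norm_num at this
  have h0 : (C a + C b * X : ℤ[X]).coeff 0 = a := by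
    simp only [Polynomial.coeff_add, Polynomial.coeff_C_mul, Polynomial.coeff_X_zero,
      Polynomial.coeff_C]
    norm_num
  have h1 : (C a + C b * X : ℤ[X]).coeff 1 = b := by
    simp only [Polynomial.coeff_add, Polynomial.coeff_C_mul, Polynomial.coeff_X_one,
      Polynomial.coeff_C]
    norm_num
  rw [hg] at h0 h1
  simp only [Polynomial.coeff_zero] at h0 h1
  exact ⟨h0.symm, h1.symm⟩

private lemma mul_formula (z : ℤ) (a b c d : ℤ) :
    ((a : Rz z) + (b : Rz z) * omegaZ z) * ((c : Rz z) + (d : Rz z) * omegaZ z)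
      = ((a*c - b*d : ℤ) : Rz z) + ((a*d + b*c + z*b*d : ℤ) : Rz z) * omegaZ z := by
  have h := omega_rel z
  push_cast
  linear_combination ((b : Rz z) * (d : Rz z)) * h


private def Qf (z a b : ℤ) : ℤ := a^2 + z*a*b + b^2

private lemma Qf_mul (z a b c d : ℤ) :
    Qf z a b * Qf z c d = Qf z (a*c - b*d) (a*d + b*c + z*b*d) := by
  simp only [Qf]; ring

private def Pg (z a b : ℤ) : Prop :=
  |z| - 2 ≤ |Qf z a b| ∨ ∃ c u v : ℤ, a = c*u ∧ b = c*v ∧ Qf z u v = 1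

private lemma Pg_swap {z a b : ℤ} (h : Pg z a b) : Pg z b a := by
  rcases h with h | ⟨c, u, v, h1, h2, h3⟩
  · left
    have he : Qf z a b = Qf z b a := by simp only [Qf]; ring
    rwa [he] at h
  · exact Or.inr ⟨c, v, u, h2, h1, by rw [← h3]; simp only [Qf]; ring⟩

private lemma Pg_neg {z a b : ℤ} (h : Pg z (-a) (-b)) : Pg z a b := by
  rcases h with h | ⟨c, u, v, h1, h2, h3⟩
  · left
    have he : Qf z (-a) (-b) = Qf z a b := by simp only [Qf]; ring
    rwa [he] at h
  · exact Or.inr ⟨-c, u, v, by linarith, by linarith, h3⟩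

private lemma key_pos (z : ℤ) (hz : 6 ≤ z) :
    ∀ n : ℕ, ∀ a b : ℤ, a.natAbs + b.natAbs ≤ n → Pg z a b := by
  intro n
  induction n with
  | zero =>
    intro a b h
    have ha : a = 0 := by omega
    have hb : b = 0 := by omega
    exact Or.inr ⟨0, 0, 1, by rw [ha]; ring, by rw [hb]; ring, by simp [Qf]⟩
  | succ n IH =>
    intro a b hm
    have habs : |z| = z := abs_of_nonneg (by omega)
    rcases eq_or_ne b 0 with rfl | hb
    · exact Or.inr ⟨a, 1, 0, by ring, by ring, by simp [Qf]⟩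
    rcases eq_or_ne a 0 with rfl | ha
    · exact Or.inr ⟨b, 0, 1, by ring, by ring, by simp [Qf]⟩
    rcases lt_trichotomy (a * b) 0 with hab | hab | hab
    · -- mixed signs : the main case
      have core : ∀ A B : ℤ, 0 < A → B < 0 → -B ≤ A →
          A.natAbs + B.natAbs ≤ n + 1 → Pg z A B := by
        intro A B hA hB hBA hm'
        obtain ⟨C, rfl⟩ : ∃ C, B = -C := ⟨-B, by ring⟩
        have hC : 1 ≤ C := by omega
        have hCA : C ≤ A := by omega
        obtain ⟨A', hA'⟩ : ∃ x : ℤ, x = z * C - A := ⟨_, rfl⟩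
        rcases lt_trichotomy A' 0 with hn0 | hn0 | hn0
        · -- A > zC : value is large positive
          left
          rw [habs]
          have h1 : 1 ≤ A - z * C := by linarith
          have h2 : A * 1 ≤ A * (A - z * C) := by
            exact mul_le_mul_of_nonneg_left h1 (le_of_lt hA)
          have h3 : z * 1 ≤ z * C := mul_le_mul_of_nonneg_left hC (by omega)
          have hv : z - 2 ≤ Qf z A (-C) := by
            simp only [Qf]; nlinarith [sq_nonneg C]
          exact le_trans hv (le_abs_self _)
        · -- A = zC : perfect square case
          refine Or.inr ⟨C, z, -1, by linarith, by ring, by simp only [Qf]; ring⟩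
        · rcases lt_or_ge A' A with hlt | hge
          · -- descent step
            have hrec : Pg z C (-A') := IH C (-A') (by omega)
            rcases hrec with h | ⟨d, u, v, h1, h2, h3⟩
            · left
              have he : Qf z C (-A') = Qf z A (-C) := by
                subst hA'; simp only [Qf]; ring
              rwa [he] at h
            · refine Or.inr ⟨d, z * u + v, -u, ?_, ?_, ?_⟩
              · linear_combination hA' + z * h1 + h2
              · linear_combination -h1
              · simp only [Qf] at h3 ⊢; linear_combination h3
          · -- A' ≥ A : value is ≤ -(z-2)
            left
            rw [habs]
            have t0 : 0 ≤ A - C := by linarith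
            have t0' : 0 ≤ z * C - A - C := by linarith
            have t1 : 0 ≤ (A - C) * (z * C - A - C) := mul_nonneg t0 t0'
            have hC2 : 1 ≤ C ^ 2 := by nlinarith
            have t2 : 0 ≤ (z - 2) * (C ^ 2 - 1) := mul_nonneg (by linarith) (by linarith)
            have hv : Qf z A (-C) ≤ -(z - 2) := by
              simp only [Qf]; nlinarith
            calc z - 2 ≤ -(Qf z A (-C)) := by linarith
              _ ≤ |Qf z A (-C)| := neg_le_abs _
      rcases mul_neg_iff.mp hab with ⟨ha', hb'⟩ | ⟨ha', hb'⟩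
      · rcases le_or_gt (-b) a with hle | hlt
        · exact core a b ha' hb' hle hm
        · have := core (-b) (-a) (by omega) (by omega) (by omega) (by omega)
          have := Pg_neg (a := b) (b := a) (by simpa using this)
          exact Pg_swap this
      · rcases le_or_gt (-a) b with hle | hlt
        · have := core b a hb' ha' hle (by omega)
          exact Pg_swap this
        · have := core (-a) (-b) (by omega) (by omega) (by omega) (by omega)
          exact Pg_neg this
    · exact absurd hab (mul_ne_zero ha hb)
    · -- same signs : value ≥ z + 2
      left
      rw [habs]
      have h1 : 1 ≤ a * b := hab
      have h2 : 2 * (a * b) ≤ a ^ 2 + b ^ 2 := by nlinarith [sq_nonneg (a - b)]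
      have hv : z - 2 ≤ Qf z a b := by
        simp only [Qf]; nlinarith
      exact le_trans hv (le_abs_self _)

private lemma key (z : ℤ) (hz : 6 ≤ |z|) (a b : ℤ) : Pg z a b := by
  rcases le_total 0 z with h | h
  · exact key_pos z (by rwa [abs_of_nonneg h] at hz) _ a b le_rfl
  · have hz' : 6 ≤ -z := by rwa [abs_of_nonpos h] at hz
    have hp := key_pos (-z) hz' _ a (-b) le_rfl
    rcases hp with hp | ⟨c, u, v, h1, h2, h3⟩
    · left
      have he : Qf (-z) a (-b) = Qf z a b := by simp only [Qf]; ring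
      have ha : |(-z)| = |z| := abs_neg z
      rwa [he, ha] at hp
    · refine Or.inr ⟨c, u, -v, h1, by linarith, ?_⟩
      rw [← h3]; simp only [Qf]; ring


private lemma unit_of_qf (z a b : ℤ) (h : Qf z a b = 1 ∨ Qf z a b = -1) :
    IsUnit ((a : Rz z) + (b : Rz z) * omegaZ z) := by
  simp only [Qf] at h
  rcases h with h | h
  · apply IsUnit.of_mul_eq_one (((a + z*b : ℤ) : Rz z) + ((-b : ℤ) : Rz z) * omegaZ z)
    rw [mul_formula]
    have e1 : a*(a + z*b) - b*(-b) = 1 := by linear_combination h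
    have e2 : a*(-b) + b*(a + z*b) + z*b*(-b) = 0 := by ring
    rw [e1, e2]
    push_cast
    ring
  · apply IsUnit.of_mul_eq_one (((-(a + z*b) : ℤ) : Rz z) + ((b : ℤ) : Rz z) * omegaZ z)
    rw [mul_formula]
    have e1 : a*(-(a + z*b)) - b*b = 1 := by linear_combination -h
    have e2 : a*b + b*(-(a + z*b)) + z*b*b = 0 := by ring
    rw [e1, e2]
    push_cast
    ring

theorem stmt15 (z : ℤ) (hz : 6 ≤ |z|) (e₁ e₂ : ℤ)
    (h₁ : e₁ = 1 ∨ e₁ = -1) (h₂ : e₂ = 1 ∨ e₂ = -1) :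
    Irreducible ((e₁ : Rz z) + e₂ • omegaZ z) := by
  have hz4 : (4:ℤ) ≤ |z| - 2 := by linarith
  simp only [zsmul_eq_mul]
  constructor
  · -- not a unit
    intro hu
    obtain ⟨y, hy⟩ := isUnit_iff_exists_inv.mp hu
    obtain ⟨c, d, rfl⟩ := repr_exists z y
    rw [mul_formula] at hy
    have h0 : ((e₁*c - e₂*d - 1 : ℤ) : Rz z)
        + ((e₁*d + e₂*c + z*e₂*d : ℤ) : Rz z) * omegaZ z = 0 := by
      push_cast at hy ⊢
      linear_combination hy
    obtain ⟨u1, u2⟩ := repr_unique z _ _ h0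
    have he1 : e₁*c - e₂*d = 1 := by linarith
    have hq : Qf z e₁ e₂ * Qf z c d = Qf z 1 0 := by
      rw [Qf_mul z e₁ e₂ c d, he1, u2]
    have hQ10 : Qf z 1 0 = 1 := by simp [Qf]
    have hunit : Qf z e₁ e₂ = 1 ∨ Qf z e₁ e₂ = -1 :=
      Int.isUnit_iff.mp (IsUnit.of_mul_eq_one (Qf z c d) (by rw [hq, hQ10]))
    have hz' : 6 ≤ z ∨ z ≤ -6 := by
      rcases le_total 0 z with h | h
      · left; rwa [abs_of_nonneg h] at hz
      · right
        rw [abs_of_nonpos h] at hz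
        omega
    rcases h₁ with rfl | rfl <;> rcases h₂ with rfl | rfl <;>
      simp only [Qf] at hunit <;> rcases hz' with h6 | h6 <;>
      rcases hunit with hv | hv <;> nlinarith [hv, h6]
  · -- every factorization has a unit factor
    rintro α β hx
    obtain ⟨a, b, rfl⟩ := repr_exists z α
    obtain ⟨c, d, rfl⟩ := repr_exists z β
    rw [mul_formula] at hx
    have h0 : ((a*c - b*d - e₁ : ℤ) : Rz z)
        + ((a*d + b*c + z*b*d - e₂ : ℤ) : Rz z) * omegaZ z = 0 := by
      push_cast at hx ⊢
      linear_combination -hx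
    obtain ⟨u1, u2⟩ := repr_unique z _ _ h0
    have he1 : a*c - b*d = e₁ := by linarith
    have he2 : a*d + b*c + z*b*d = e₂ := by linarith
    have hq : Qf z a b * Qf z c d = Qf z e₁ e₂ := by
      rw [Qf_mul z a b c d, he1, he2]
    have hE : IsUnit e₁ := by
      rcases h₁ with rfl | rfl
      · exact isUnit_one
      · exact isUnit_one.neg
    rcases key z hz a b with hA | ⟨s, u, v, hau, hbv, hq1⟩
    · rcases key z hz c d with hC | ⟨s, u, v, hcu, hdv, hq1⟩
      · exfalso
        have hee : e₁ * e₂ = 1 ∨ e₁ * e₂ = -1 := by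
          rcases h₁ with rfl | rfl <;> rcases h₂ with rfl | rfl <;> norm_num
        have hw' : Qf z e₁ e₂ = 2 + z * (e₁ * e₂) := by
          rcases h₁ with rfl | rfl <;> rcases h₂ with rfl | rfl <;>
            simp only [Qf] <;> ring
        have hw : Qf z e₁ e₂ = 2 + z ∨ Qf z e₁ e₂ = 2 - z := by
          rcases hee with h | h
          · left; rw [hw', h]; ring
          · right; rw [hw', h]; ring
        have hwabs : |Qf z e₁ e₂| ≤ |z| + 2 := by
          rcases abs_cases z with ⟨hz1, _⟩ | ⟨hz1, _⟩ <;>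
            rcases abs_cases (Qf z e₁ e₂) with ⟨hq1', _⟩ | ⟨hq1', _⟩ <;>
            rcases hw with hw | hw <;> linarith
        have hprod : |Qf z a b| * |Qf z c d| = |Qf z e₁ e₂| := by
          rw [← abs_mul, hq]
        have hmul : (|z| - 2) * (|z| - 2) ≤ |Qf z a b| * |Qf z c d| :=
          mul_le_mul hA hC (by linarith) (abs_nonneg _)
        nlinarith [hmul, hprod, hwabs, hz]
      · -- β = s·unit  ⇒  s ∣ e₁ ⇒ s = ±1 ⇒ β unit
        have hdvd : s ∣ e₁ := ⟨a*u - b*v, by rw [← he1, hcu, hdv]; ring⟩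
        have hs : s = 1 ∨ s = -1 := Int.isUnit_iff.mp (isUnit_of_dvd_unit hdvd hE)
        have hsq : Qf z c d = s^2 * Qf z u v := by
          rw [hcu, hdv]; simp only [Qf]; ring
        have hqcd : Qf z c d = 1 := by
          rcases hs with rfl | rfl <;> rw [hsq, hq1] <;> ring
        exact Or.inr (unit_of_qf z c d (Or.inl hqcd))
    · -- α = s·unit  ⇒  s ∣ e₁ ⇒ α unit
      have hdvd : s ∣ e₁ := ⟨u*c - v*d, by rw [← he1, hau, hbv]; ring⟩
      have hs : s = 1 ∨ s = -1 := Int.isUnit_iff.mp (isUnit_of_dvd_unit hdvd hE)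
      have hsq : Qf z a b = s^2 * Qf z u v := by
        rw [hau, hbv]; simp only [Qf]; ring
      have hqab : Qf z a b = 1 := by
        rcases hs with rfl | rfl <;> rw [hsq, hq1] <;> ring
      exact Or.inl (unit_of_qf z a b (Or.inl hqab))
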